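/- For every nonnegative integer k, √3 · k!(k+1)!/(2π (1/3)_{k+1}(2/3)_{k+1}) = 1 + (2/9)·k! · ∑_{n=0}^∞ (1/3)_n (2/3)_n/((n+1)!(n+k+1)!). -/

import Mathlib

open Real Filter Topology

noncomputable def rising (x : ℝ) (n : ℕ) : ℝ := ∏ i ∈ Finset.range n, (x + i)

lemma rising_zero (x : ℝ) : rising x 0 = 1 := by simp [rising]

lemma rising_succ (x : ℝ) (n : ℕ) : rising x (n+1) = rising x n * (x + n) := by
  simp [rising, Finset.prod_range_succ]

lemma rising_succ' (x : ℝ) (n : ℕ) : rising x (n+1) = x * rising (x+1) n := by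
  rw [rising, Finset.prod_range_succ']
  rw [rising, mul_comm]
  congr 1
  · simp
  · apply Finset.prod_congr rfl
    intro i _
    push_cast
    ring

lemma rising_pos {x : ℝ} (hx : 0 < x) (n : ℕ) : 0 < rising x n := by
  apply Finset.prod_pos
  intro i _
  positivity

lemma rising_le {x y : ℝ} (hx : 0 ≤ x) (hxy : x ≤ y) (n : ℕ) : rising x n ≤ rising y n := by
  apply Finset.prod_le_prod
  · intro i _; positivity
  · intro i _; linarith

lemma rising_one (n : ℕ) : rising 1 n = n.factorial := by
  induction n with
  | zero => simp [rising_zero]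
  | succ m ih => rw [rising_succ, ih]; push_cast [Nat.factorial_succ]; ring

lemma rising_two (n : ℕ) : rising 2 n = (n+1).factorial := by
  induction n with
  | zero => simp [rising_zero]
  | succ m ih => rw [rising_succ, ih]; push_cast [Nat.factorial_succ]; ring

lemma rising_nat (k n : ℕ) : rising ((k:ℝ)+1) n * k.factorial = (n+k).factorial := by
  induction n with
  | zero => simp [rising_zero]
  | succ m ih =>
      rw [rising_succ, show m+1+k = (m+k)+1 by ring, Nat.factorial_succ]
      push_cast
      nlinarith [ih]

noncomputable def tt (c : ℝ) (n : ℕ) : ℝ :=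
  rising (-2/3) n * rising (-1/3) n / (rising c n * n.factorial)

lemma tt_zero (c : ℝ) : tt c 0 = 1 := by simp [tt, rising_zero]

lemma tt_succ_eq (c : ℝ) (m : ℕ) :
    tt c (m+1) = (2/9) * (rising (1/3) m * rising (2/3) m) / (rising c (m+1) * (m+1).factorial) := by
  rw [tt, rising_succ' (-2/3), rising_succ' (-1/3)]
  norm_num
  ring_nf

lemma tt_nonneg {c : ℝ} (hc : 0 < c) (n : ℕ) : 0 ≤ tt c n := by
  cases n with
  | zero => rw [tt_zero]; norm_num
  | succ m =>
      rw [tt_succ_eq]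
      have h1 := rising_pos (show (0:ℝ) < 1/3 by norm_num) m
      have h2 := rising_pos (show (0:ℝ) < 2/3 by norm_num) m
      have h3 := rising_pos hc (m+1)
      have h4 : (0:ℝ) < (m+1).factorial := by positivity
      positivity

lemma tt_le {c : ℝ} (hc : 1 ≤ c) (m : ℕ) :
    tt c (m+1) ≤ 2/(9*c*((m:ℝ)+1)^2) := by
  have hc0 : (0:ℝ) < c := by linarith
  have h1 : rising (1/3) m ≤ m.factorial := by
    rw [← rising_one]; exact rising_le (by norm_num) (by norm_num) m
  have h2 : rising (2/3) m ≤ m.factorial := by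
    rw [← rising_one]; exact rising_le (by norm_num) (by norm_num) m
  have h3 : c * (m+1).factorial ≤ rising c (m+1) := by
    rw [rising_succ', ← rising_two]
    have := rising_le (show (0:ℝ) ≤ 2 by norm_num) (show (2:ℝ) ≤ c+1 by linarith) m
    nlinarith [rising_pos (show (0:ℝ) < 2 by norm_num) m]
  have hf : (0:ℝ) < (m.factorial : ℝ) := by positivity
  have hf1 : ((m+1).factorial : ℝ) = ((m:ℝ)+1) * m.factorial := by
    push_cast [Nat.factorial_succ]; ring
  have hrp := rising_pos hc0 (m+1)
  have h1p := rising_pos (show (0:ℝ) < 1/3 by norm_num) m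
  have h2p := rising_pos (show (0:ℝ) < 2/3 by norm_num) m
  rw [tt_succ_eq]
  have hden : (0:ℝ) < rising c (m+1) * (m+1).factorial := by positivity
  have hden2 : (0:ℝ) < c * (m+1).factorial * (m+1).factorial := by positivity
  calc (2/9) * (rising (1/3) m * rising (2/3) m) / (rising c (m+1) * (m+1).factorial)
      ≤ (2/9) * ((m.factorial:ℝ) * m.factorial) / (c * (m+1).factorial * (m+1).factorial) := by
        apply div_le_div₀ (by positivity)
        · nlinarith
        · exact hden2
        · have hfp : (0:ℝ) < ((m+1).factorial : ℝ) := by positivity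
          nlinarith
      _ = 2/(9*c*((m:ℝ)+1)^2) := by
        rw [hf1]; field_simp

lemma summable_tt {c : ℝ} (hc : 1 ≤ c) : Summable (tt c) := by
  have hc0 : (0:ℝ) < c := by linarith
  rw [← summable_nat_add_iff 1]
  apply Summable.of_nonneg_of_le (fun m => tt_nonneg hc0 (m+1)) (fun m => tt_le hc m)
  have h : Summable (fun m : ℕ => (1:ℝ)/((m:ℝ)+1)^2) := by
    have := (summable_nat_add_iff 1).mpr (Real.summable_one_div_nat_pow.mpr (show 1 < 2 by norm_num))
    simpa [push_cast] using this
  have := h.mul_left (2/(9*c))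
  apply this.congr
  intro m
  field_simp

lemma w_tendsto_zero {c : ℝ} (hc : 1 ≤ c) :
    Tendsto (fun n : ℕ => (n:ℝ) * tt c n) atTop (𝓝 0) := by
  have hc0 : (0:ℝ) < c := by linarith
  have hg : Tendsto (fun n : ℕ => (2/(9*c))/(n:ℝ)) atTop (𝓝 0) :=
    tendsto_const_div_atTop_nhds_zero_nat _
  refine squeeze_zero (fun n => mul_nonneg (Nat.cast_nonneg n) (tt_nonneg hc0 n)) ?_ hg
  intro n
  cases n with
  | zero => simp
  | succ m =>
      have h := tt_le hc m
      have hm : (0:ℝ) < (m:ℝ)+1 := by positivity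
      have : ((m:ℝ)+1) * tt c (m+1) ≤ ((m:ℝ)+1) * (2/(9*c*((m:ℝ)+1)^2)) :=
        mul_le_mul_of_nonneg_left h (by positivity)
      calc ((m+1 : ℕ):ℝ) * tt c (m+1) ≤ ((m:ℝ)+1) * (2/(9*c*((m:ℝ)+1)^2)) := by
            push_cast; exact this
        _ = (2/(9*c))/((m+1:ℕ):ℝ) := by push_cast; field_simp

lemma pointwise_key {c : ℝ} (hc : 1 ≤ c) (n : ℕ) :
    c*(c+1) * tt c n - (c+1/3)*(c+2/3) * tt (c+1) n
      = c * ((n:ℝ) * tt c n - ((n:ℝ)+1) * tt c (n+1)) := by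
  have hc0 : (0:ℝ) < c := by linarith
  have hR : (0:ℝ) < rising c n := rising_pos hc0 n
  have hcn : (0:ℝ) < c + n := by positivity
  have hF : (0:ℝ) < (n.factorial : ℝ) := by positivity
  have h1 : rising (c+1) n = rising c n * (c+n) / c := by
    rw [← rising_succ, rising_succ']; field_simp
  have h2 : rising c (n+1) = rising c n * (c+n) := rising_succ c n
  have h3 : rising (-2/3) (n+1) = rising (-2/3) n * (-2/3+n) := rising_succ _ n
  have h4 : rising (-1/3) (n+1) = rising (-1/3) n * (-1/3+n) := rising_succ _ n
  have h5 : ((n+1).factorial : ℝ) = ((n:ℝ)+1) * n.factorial := by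
    push_cast [Nat.factorial_succ]; ring
  simp only [tt, h1, h2, h3, h4, h5]
  have hn1 : (0:ℝ) < (n:ℝ)+1 := by positivity
  field_simp
  ring

lemma contiguous {c : ℝ} (hc : 1 ≤ c) :
    (∑' n, tt c n) = ((c+1/3)*(c+2/3)/(c*(c+1))) * (∑' n, tt (c+1) n) := by
  have hc0 : (0:ℝ) < c := by linarith
  have s1 : Summable (tt c) := summable_tt hc
  have s2 : Summable (tt (c+1)) := summable_tt (by linarith)
  have hv : Summable (fun n => c*(c+1) * tt c n - (c+1/3)*(c+2/3) * tt (c+1) n) :=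
    (s1.mul_left _).sub (s2.mul_left _)
  have hw : Summable (fun n : ℕ => (n:ℝ) * tt c n - ((n:ℝ)+1) * tt c (n+1)) := by
    refine (hv.div_const c).congr fun n => ?_
    rw [pointwise_key hc n]
    field_simp
  have hts : (∑' n : ℕ, ((n:ℝ) * tt c n - ((n:ℝ)+1) * tt c (n+1))) = 0 := by
    have hps := hw.hasSum.tendsto_sum_nat
    have heq : ∀ N, (∑ i ∈ Finset.range N, ((i:ℝ) * tt c i - ((i:ℝ)+1) * tt c (i+1)))
        = - ((N:ℝ) * tt c N) := by
      intro N
      calc (∑ i ∈ Finset.range N, ((i:ℝ) * tt c i - ((i:ℝ)+1) * tt c (i+1)))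
          = ∑ i ∈ Finset.range N, (((i:ℕ):ℝ) * tt c i - (((i+1:ℕ)):ℝ) * tt c (i+1)) := by
            apply Finset.sum_congr rfl
            intro i _
            push_cast
            ring
        _ = ((0:ℕ):ℝ) * tt c 0 - (N:ℝ) * tt c N := Finset.sum_range_sub' (fun i : ℕ => (i:ℝ) * tt c i) N
        _ = - ((N:ℝ) * tt c N) := by simp
    have h2 : Tendsto (fun N => ∑ i ∈ Finset.range N, ((i:ℝ) * tt c i - ((i:ℝ)+1) * tt c (i+1)))
        atTop (𝓝 0) := by
      simp only [heq]
      simpa using (w_tendsto_zero hc).neg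
    exact tendsto_nhds_unique hps h2
  have hv0 : (∑' n, (c*(c+1) * tt c n - (c+1/3)*(c+2/3) * tt (c+1) n)) = 0 := by
    calc (∑' n, (c*(c+1) * tt c n - (c+1/3)*(c+2/3) * tt (c+1) n))
        = ∑' n : ℕ, c * ((n:ℝ) * tt c n - ((n:ℝ)+1) * tt c (n+1)) :=
          tsum_congr (pointwise_key hc)
      _ = c * ∑' n : ℕ, ((n:ℝ) * tt c n - ((n:ℝ)+1) * tt c (n+1)) := tsum_mul_left
      _ = 0 := by rw [hts, mul_zero]
  have hsplit : (∑' n, (c*(c+1) * tt c n - (c+1/3)*(c+2/3) * tt (c+1) n))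
      = c*(c+1) * (∑' n, tt c n) - (c+1/3)*(c+2/3) * (∑' n, tt (c+1) n) := by
    rw [Summable.tsum_sub (s1.mul_left _) (s2.mul_left _), tsum_mul_left, tsum_mul_left]
  have hmain : c*(c+1) * (∑' n, tt c n) = (c+1/3)*(c+2/3) * (∑' n, tt (c+1) n) := by
    have := hsplit ▸ hv0
    linarith
  have hne : c*(c+1) ≠ 0 := by positivity
  field_simp
  linarith [hmain]

noncomputable def ratio (x : ℝ) : ℝ := (x+1/3)*(x+2/3)/(x*(x+1))

lemma iterG {c : ℝ} (hc : 1 ≤ c) (m : ℕ) :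
    (∑' n, tt c n) = (∏ j ∈ Finset.range m, ratio (c+j)) * (∑' n, tt (c+m) n) := by
  induction m with
  | zero => simp
  | succ p ih =>
      have h1 : (1:ℝ) ≤ c + p := by
        have : (0:ℝ) ≤ (p:ℝ) := Nat.cast_nonneg p
        linarith
      have h2 := contiguous h1
      have h3 : c + (p:ℝ) + 1 = c + ((p+1 : ℕ):ℝ) := by push_cast; ring
      rw [Finset.prod_range_succ, ih, h2, ratio]
      rw [h3]
      ring

lemma G_tendsto_one {c : ℝ} (hc : 1 ≤ c) :
    Tendsto (fun m : ℕ => ∑' n, tt (c+m) n) atTop (𝓝 1) := by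
  set K : ℝ := ∑' n : ℕ, (1:ℝ)/((n:ℝ)+1)^2 with hK
  have hKs : Summable (fun n : ℕ => (1:ℝ)/((n:ℝ)+1)^2) := by
    have := (summable_nat_add_iff 1).mpr (Real.summable_one_div_nat_pow.mpr (show 1 < 2 by norm_num))
    simpa [push_cast] using this
  have hK0 : 0 ≤ K := tsum_nonneg (fun n => by positivity)
  have hcm : ∀ m : ℕ, (1:ℝ) ≤ c + m := fun m => by
    have : (0:ℝ) ≤ (m:ℝ) := Nat.cast_nonneg m
    linarith
  have hcm0 : ∀ m : ℕ, (0:ℝ) < c + m := fun m => by linarith [hcm m]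
  have key : ∀ m : ℕ, (∑' n, tt (c+m) n) - 1 = ∑' n : ℕ, tt (c+m) (n+1) := by
    intro m
    rw [Summable.tsum_eq_zero_add (summable_tt (hcm m)), tt_zero]
    ring
  have hb : ∀ m : ℕ, (∑' n : ℕ, tt (c+m) (n+1)) ≤ (2*K/9) / (c+m) := by
    intro m
    have h1 : (∑' n : ℕ, tt (c+m) (n+1)) ≤ ∑' n : ℕ, (2/(9*(c+m))) * ((1:ℝ)/((n:ℝ)+1)^2) := by
      apply Summable.tsum_le_tsum
      · intro n
        have := tt_le (hcm m) n
        calc tt (c+m) (n+1) ≤ 2/(9*(c+m)*((n:ℝ)+1)^2) := this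
          _ = (2/(9*(c+m))) * ((1:ℝ)/((n:ℝ)+1)^2) := by
              rw [mul_one_div, div_div]
      · exact (summable_nat_add_iff 1).mpr (summable_tt (hcm m))
      · exact hKs.mul_left _
    rw [tsum_mul_left] at h1
    calc (∑' n : ℕ, tt (c+m) (n+1)) ≤ (2/(9*(c+m))) * K := h1
      _ = (2*K/9) / (c+m) := by
          have := hcm0 m
          rw [div_mul_eq_mul_div, div_eq_div_iff (by positivity) (by positivity)]
          ring
  have hg : Tendsto (fun m : ℕ => (2*K/9)/(c+m)) atTop (𝓝 0) := by
    apply Tendsto.div_atTop tendsto_const_nhds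
    exact tendsto_atTop_add_const_left _ _ tendsto_natCast_atTop_atTop
  have hsq : Tendsto (fun m : ℕ => (∑' n, tt (c+m) n) - 1) atTop (𝓝 0) := by
    refine squeeze_zero (g := fun m : ℕ => (2*K/9)/(c+m)) ?_ ?_ hg
    · intro m
      rw [key m]
      exact tsum_nonneg (fun n => tt_nonneg (hcm0 m) (n+1))
    · intro m
      rw [key m]
      exact hb m
  have := hsq.add (tendsto_const_nhds (x := (1:ℝ)))
  simpa using this

lemma prod_ratio_eq (c : ℝ) (M : ℕ) :
    ∏ j ∈ Finset.range M, ratio (c+j)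
      = rising (c+1/3) M * rising (c+2/3) M / (rising c M * rising (c+1) M) := by
  unfold ratio rising
  rw [← Finset.prod_mul_distrib, ← Finset.prod_mul_distrib, ← Finset.prod_div_distrib]
  apply Finset.prod_congr rfl
  intro j _
  ring

lemma gammaSeq_eq (s : ℝ) (m : ℕ) :
    Real.GammaSeq s m = (m:ℝ)^s * m.factorial / rising s (m+1) := rfl

lemma prod_ratio_gammaSeq {c : ℝ} (hc : 0 < c) {m : ℕ} (hm : 1 ≤ m) :
    ∏ j ∈ Finset.range (m+1), ratio (c+j)
      = Real.GammaSeq c m * Real.GammaSeq (c+1) m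
        / (Real.GammaSeq (c+1/3) m * Real.GammaSeq (c+2/3) m) := by
  have hm0 : (0:ℝ) < (m:ℝ) := by exact_mod_cast hm
  have hf : (0:ℝ) < (m.factorial : ℝ) := by positivity
  have p1 : (0:ℝ) < rising c (m+1) := rising_pos hc _
  have p2 : (0:ℝ) < rising (c+1) (m+1) := rising_pos (by linarith) _
  have p3 : (0:ℝ) < rising (c+1/3) (m+1) := rising_pos (by linarith) _
  have p4 : (0:ℝ) < rising (c+2/3) (m+1) := rising_pos (by linarith) _
  have r1 : (0:ℝ) < (m:ℝ)^c := rpow_pos_of_pos hm0 _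
  have r2 : (0:ℝ) < (m:ℝ)^(c+1) := rpow_pos_of_pos hm0 _
  have r3 : (0:ℝ) < (m:ℝ)^(c+1/3) := rpow_pos_of_pos hm0 _
  have r4 : (0:ℝ) < (m:ℝ)^(c+2/3) := rpow_pos_of_pos hm0 _
  have key : (m:ℝ)^c * (m:ℝ)^(c+1) = (m:ℝ)^(c+1/3) * (m:ℝ)^(c+2/3) := by
    rw [← Real.rpow_add hm0, ← Real.rpow_add hm0]
    congr 1
    ring
  rw [prod_ratio_eq, gammaSeq_eq, gammaSeq_eq, gammaSeq_eq, gammaSeq_eq]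
  set R1 := rising c (m+1) with hR1
  set R2 := rising (c+1) (m+1) with hR2
  set R3 := rising (c+1/3) (m+1) with hR3
  set R4 := rising (c+2/3) (m+1) with hR4
  set A1 := (m:ℝ)^c with hA1
  set A2 := (m:ℝ)^(c+1) with hA2
  set A3 := (m:ℝ)^(c+1/3) with hA3
  set A4 := (m:ℝ)^(c+2/3) with hA4
  have n1 : R1 ≠ 0 := ne_of_gt p1
  have n2 : R2 ≠ 0 := ne_of_gt p2
  have n3 : R3 ≠ 0 := ne_of_gt p3
  have n4 : R4 ≠ 0 := ne_of_gt p4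
  have m1 : A1 ≠ 0 := ne_of_gt r1
  have m2 : A2 ≠ 0 := ne_of_gt r2
  have m3 : A3 ≠ 0 := ne_of_gt r3
  have m4 : A4 ≠ 0 := ne_of_gt r4
  have hfne : (m.factorial : ℝ) ≠ 0 := ne_of_gt hf
  rw [div_eq_div_iff (mul_pos p1 p2).ne' (by positivity)]
  field_simp
  linear_combination (-1:ℝ) * key


lemma P_tendsto {c : ℝ} (hc : 0 < c) :
    Tendsto (fun m : ℕ => ∏ j ∈ Finset.range m, ratio (c+j)) atTop
      (𝓝 (Real.Gamma c * Real.Gamma (c+1) / (Real.Gamma (c+1/3) * Real.Gamma (c+2/3)))) := by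
  have hden : Real.Gamma (c+1/3) * Real.Gamma (c+2/3) ≠ 0 :=
    (mul_pos (Real.Gamma_pos_of_pos (by linarith)) (Real.Gamma_pos_of_pos (by linarith))).ne'
  have hQ : Tendsto (fun m : ℕ => Real.GammaSeq c m * Real.GammaSeq (c+1) m
      / (Real.GammaSeq (c+1/3) m * Real.GammaSeq (c+2/3) m)) atTop
      (𝓝 (Real.Gamma c * Real.Gamma (c+1) / (Real.Gamma (c+1/3) * Real.Gamma (c+2/3)))) :=
    ((Real.GammaSeq_tendsto_Gamma c).mul (Real.GammaSeq_tendsto_Gamma (c+1))).div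
      ((Real.GammaSeq_tendsto_Gamma (c+1/3)).mul (Real.GammaSeq_tendsto_Gamma (c+2/3))) hden
  rw [← tendsto_add_atTop_iff_nat 1]
  refine Tendsto.congr' ?_ hQ
  filter_upwards [eventually_ge_atTop 1] with m hm
  exact (prod_ratio_gammaSeq hc hm).symm

lemma gauss {c : ℝ} (hc : 1 ≤ c) :
    (∑' n, tt c n) = Real.Gamma c * Real.Gamma (c+1) / (Real.Gamma (c+1/3) * Real.Gamma (c+2/3)) := by
  have hc0 : (0:ℝ) < c := by linarith
  have h1 := (P_tendsto hc0).mul (G_tendsto_one hc)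
  rw [mul_one] at h1
  have h2 : (fun m : ℕ => (∏ j ∈ Finset.range m, ratio (c+j)) * (∑' n, tt (c+m) n))
      = fun _ : ℕ => (∑' n, tt c n) := funext fun m => (iterG hc m).symm
  rw [h2] at h1
  exact tendsto_nhds_unique tendsto_const_nhds h1

lemma Gamma_rising {x : ℝ} (hx : 0 < x) (n : ℕ) :
    Real.Gamma (x + n) = rising x n * Real.Gamma x := by
  induction n with
  | zero => simp [rising_zero]
  | succ m ih =>
      have hxm : x + (m:ℝ) ≠ 0 := by positivity
      have : x + ((m+1 : ℕ):ℝ) = (x + m) + 1 := by push_cast; ring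
      rw [this, Real.Gamma_add_one hxm, ih, rising_succ]
      ring

theorem stmt11 (k : ℕ) :
    Real.sqrt 3 * (k.factorial : ℝ) * ((k + 1).factorial : ℝ) / (2 * π * rising (1/3) (k + 1) * rising (2/3) (k + 1)) =
    1 + (2/9) * (k.factorial : ℝ) *
      ∑' n : ℕ, rising (1/3) n * rising (2/3) n /
        ((n + 1).factorial * (n + k + 1).factorial) := by
  set c : ℝ := (k:ℝ) + 1 with hc
  have hc1 : (1:ℝ) ≤ c := by
    have : (0:ℝ) ≤ (k:ℝ) := Nat.cast_nonneg k
    rw [hc]; linarith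
  -- RHS = ∑' tt c
  have hterm : ∀ n : ℕ, tt c (n+1)
      = (2/9) * (k.factorial : ℝ) * (rising (1/3) n * rising (2/3) n /
          ((n + 1).factorial * (n + k + 1).factorial)) := by
    intro n
    rw [tt_succ_eq]
    have hrn : rising c (n+1) * (k.factorial:ℝ) = ((n+1+k).factorial : ℝ) := rising_nat k (n+1)
    have hkk : ((n+1+k).factorial : ℝ) = ((n+k+1).factorial : ℝ) := by
      have hnk : n+1+k = n+k+1 := by omega
      rw [hnk]
    have hfk : (0:ℝ) < (k.factorial : ℝ) := by positivity
    have hf1 : (0:ℝ) < ((n+1).factorial : ℝ) := by positivity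
    have hf2 : (0:ℝ) < ((n+k+1).factorial : ℝ) := by positivity
    have hrc : (0:ℝ) < rising c (n+1) := rising_pos (by linarith) _
    rw [hkk] at hrn
    field_simp
    linear_combination (-(rising (1/3) n * rising (2/3) n)) * hrn
  have hRHS : 1 + (2/9) * (k.factorial : ℝ) *
      (∑' n : ℕ, rising (1/3) n * rising (2/3) n /
        ((n + 1).factorial * (n + k + 1).factorial)) = ∑' n, tt c n := by
    rw [Summable.tsum_eq_zero_add (summable_tt hc1), tt_zero]
    congr 1
    rw [← tsum_mul_left]
    exact (tsum_congr hterm).symm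
  rw [hRHS, gauss hc1]
  -- now evaluate Gammas
  have hG1 : Real.Gamma c = (k.factorial : ℝ) := by
    rw [hc]
    exact_mod_cast Real.Gamma_nat_eq_factorial k
  have hG2 : Real.Gamma (c+1) = ((k+1).factorial : ℝ) := by
    have : c + 1 = ((k+1 : ℕ):ℝ) + 1 := by push_cast [hc]; ring
    rw [this]
    exact_mod_cast Real.Gamma_nat_eq_factorial (k+1)
  have hG3 : Real.Gamma (c+1/3) = rising (1/3) (k+1) * Real.Gamma (1/3) := by
    have : c + 1/3 = 1/3 + ((k+1 : ℕ):ℝ) := by push_cast [hc]; ring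
    rw [this, Gamma_rising (by norm_num)]
  have hG4 : Real.Gamma (c+2/3) = rising (2/3) (k+1) * Real.Gamma (2/3) := by
    have : c + 2/3 = 2/3 + ((k+1 : ℕ):ℝ) := by push_cast [hc]; ring
    rw [this, Gamma_rising (by norm_num)]
  have hrefl : Real.Gamma (1/3) * Real.Gamma (2/3) = 2 * π / Real.sqrt 3 := by
    have h := Real.Gamma_mul_Gamma_one_sub (1/3)
    have h13 : (1:ℝ) - 1/3 = 2/3 := by norm_num
    have h2 : π * (1/3) = π / 3 := by ring
    rw [h13, h2, Real.sin_pi_div_three] at h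
    rw [h, div_div_eq_mul_div]
    ring
  rw [hG1, hG2, hG3, hG4]
  have hs3 : (0:ℝ) < Real.sqrt 3 := Real.sqrt_pos.mpr (by norm_num)
  have hs3' : Real.sqrt 3 * Real.sqrt 3 = 3 := Real.mul_self_sqrt (by norm_num)
  have hpi : (0:ℝ) < π := Real.pi_pos
  have hr1 : (0:ℝ) < rising (1/3) (k+1) := rising_pos (by norm_num) _
  have hr2 : (0:ℝ) < rising (2/3) (k+1) := rising_pos (by norm_num) _
  have hGa : (0:ℝ) < Real.Gamma (1/3) := Real.Gamma_pos_of_pos (by norm_num)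
  have hGb : (0:ℝ) < Real.Gamma (2/3) := Real.Gamma_pos_of_pos (by norm_num)
  rw [div_eq_div_iff (by positivity) (by positivity)]
  have key : Real.Gamma (1/3) * Real.Gamma (2/3) * Real.sqrt 3 = 2 * π := by
    rw [hrefl]
    field_simp
  linear_combination ((k.factorial:ℝ) * ((k+1).factorial:ℝ) * rising (1/3) (k+1) * rising (2/3) (k+1)) * key
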